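/- arXiv:2209.10855 — 4 statements merged into one kernel-verified Lean document; each statement's English description precedes it below -/
import Mathlib

section
/- In any maximum induced matching of the stacked-book graph G_{m,2} = S_m □ P_2 (m ≥ 3), the central vertices of the two star layers are unsaturated (neither is an endpoint of an edge in the matching). -/
open SimpleGraph

/-- The star graph on `m` vertices: vertex `0` is the center, the rest are leaves. -/
def starGraph (m : ℕ) : SimpleGraph (Fin m) :=
  SimpleGraph.fromRel (fun i _ => i.val = 0)

/-- `M` is an induced matching of `G`: every element of `M` is an edge of `G`, and no two
distinct edges of `M` share an endpoint or have endpoints joined by an edge of `G`. -/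
def IsInducedMatching {V : Type*} (G : SimpleGraph V) (M : Finset (Sym2 V)) : Prop :=
  ↑M ⊆ G.edgeSet ∧
    ∀ e₁ ∈ M, ∀ e₂ ∈ M, e₁ ≠ e₂ → ∀ u ∈ e₁, ∀ v ∈ e₂, u ≠ v ∧ ¬G.Adj u v

/-- The maximum induced matching number of `G`. -/
noncomputable def im {V : Type*} (G : SimpleGraph V) : ℕ :=
  sSup {k | ∃ M : Finset (Sym2 V), IsInducedMatching G M ∧ M.card = k}

/-- The stacked-book graph `G_{m,n} = S_m □ P_n`. -/
def stackedBook (m n : ℕ) : SimpleGraph (Fin m × Fin n) :=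
  starGraph m □ SimpleGraph.pathGraph n

/-! If an edge of an induced matching saturates a center `c`, every other edge of the matching
would have to lie among the vertices distinct from and non-adjacent to `c`; in `S_m □ P_2` these
are the leaves of the other layer, which span no edge. So the matching is a single edge, whereas
the two rungs over two distinct leaves already form an induced matching of size two. -/

namespace IsInducedMatching

variable {V : Type*} {G : SimpleGraph V} {M : Finset (Sym2 V)}

lemma eq_of_mem_of_isIndepSet (hM : IsInducedMatching G M) {e e' : Sym2 V} (he : e ∈ M)
    (he' : e' ∈ M) {u : V} (hu : u ∈ e) (hind : G.IsIndepSet {v | v ≠ u ∧ ¬G.Adj u v}) :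
    e' = e := by
  by_contra hne
  induction e' using Sym2.ind with
  | _ x y =>
    have hxy : G.Adj x y := hM.1 he'
    have hx := hM.2 e he _ he' (Ne.symm hne) u hu x (Sym2.mem_mk_left x y)
    have hy := hM.2 e he _ he' (Ne.symm hne) u hu y (Sym2.mem_mk_right x y)
    exact hind ⟨hx.1.symm, hx.2⟩ ⟨hy.1.symm, hy.2⟩ hxy.ne hxy

lemma card_le_im [Fintype V] (hM : IsInducedMatching G M) : M.card ≤ im G := by
  classical
  refine le_csSup ⟨Fintype.card (Sym2 V), ?_⟩ ⟨M, hM, rfl⟩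
  rintro k ⟨N, -, rfl⟩
  exact N.card_le_univ

end IsInducedMatching

lemma isInducedMatching_pair {V : Type*} [DecidableEq V] {G : SimpleGraph V} {e₁ e₂ : Sym2 V}
    (h₁ : e₁ ∈ G.edgeSet) (h₂ : e₂ ∈ G.edgeSet) (h : ∀ u ∈ e₁, ∀ v ∈ e₂, u ≠ v ∧ ¬G.Adj u v) :
    IsInducedMatching G {e₁, e₂} := by
  refine ⟨by simp [Set.insert_subset_iff, h₁, h₂], ?_⟩
  simp only [Finset.mem_insert, Finset.mem_singleton]
  rintro f₁ (rfl | rfl) f₂ (rfl | rfl) hne u hu v hv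
  · exact absurd rfl hne
  · exact h u hu v hv
  · obtain ⟨hvu, hadj⟩ := h v hv u hu
    exact ⟨hvu.symm, fun h' => hadj h'.symm⟩
  · exact absurd rfl hne

section StackedBook

variable {m n : ℕ}

lemma stackedBook_adj {x y : Fin m × Fin n} :
    (stackedBook m n).Adj x y ↔
      (x.1 ≠ y.1 ∧ (x.1.val = 0 ∨ y.1.val = 0)) ∧ x.2 = y.2 ∨
        (pathGraph n).Adj x.2 y.2 ∧ x.1 = y.1 := by
  simp [stackedBook, _root_.starGraph]

lemma stackedBook_adj_of_leaves {x y : Fin m × Fin n} (hx : x.1.val ≠ 0) (hy : y.1.val ≠ 0)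
    (hxy : (stackedBook m n).Adj x y) : x.1 = y.1 ∧ (pathGraph n).Adj x.2 y.2 := by
  rcases stackedBook_adj.1 hxy with ⟨hstar, -⟩ | ⟨hpath, heq⟩
  · exact absurd hstar.2 (by tauto)
  · exact ⟨heq, hpath⟩

lemma stackedBook_two_rung (a : Fin m) : (stackedBook m 2).Adj (a, 0) (a, 1) :=
  boxProd_adj_right.2 (by simp [pathGraph_adj])

lemma stackedBook_two_leaf_of_not_adj_center {c : Fin m} (hc : c.val = 0) (j : Fin 2)
    {v : Fin m × Fin 2} (hne : v ≠ (c, j)) (hv : ¬(stackedBook m 2).Adj (c, j) v) :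
    v.1.val ≠ 0 ∧ v.2 ≠ j := by
  obtain ⟨a, k⟩ := v
  have hnot := mt stackedBook_adj.2 hv
  simp only [pathGraph_adj, not_or, not_and] at hnot
  refine ⟨fun ha => ?_, fun hk => ?_⟩
  · have hac : c = a := Fin.ext (hc.trans ha.symm)
    have hjk : j ≠ k := fun h => hne (by rw [hac, h])
    omega
  · subst hk
    exact hnot.1 ⟨fun h => hne (by rw [h]), Or.inl hc⟩ rfl

lemma stackedBook_two_isIndepSet_nonNeighbors {c : Fin m} (hc : c.val = 0) (j : Fin 2) :
    (stackedBook m 2).IsIndepSet {v | v ≠ (c, j) ∧ ¬(stackedBook m 2).Adj (c, j) v} := by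
  rintro x ⟨hxc, hx⟩ y ⟨hyc, hy⟩ - hxy
  obtain ⟨hx0, hxj⟩ := stackedBook_two_leaf_of_not_adj_center hc j hxc hx
  obtain ⟨hy0, hyj⟩ := stackedBook_two_leaf_of_not_adj_center hc j hyc hy
  have hlayer : x.2 = y.2 := by omega
  exact (stackedBook_adj_of_leaves hx0 hy0 hxy).2.ne hlayer

lemma two_le_im_stackedBook_two (hm : 3 ≤ m) : 2 ≤ im (stackedBook m 2) := by
  set a : Fin m := ⟨1, by omega⟩
  set b : Fin m := ⟨2, by omega⟩
  have hab : a ≠ b := by simp [a, b]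
  have hrungs : IsInducedMatching (stackedBook m 2) {s((a, 0), (a, 1)), s((b, 0), (b, 1))} := by
    refine isInducedMatching_pair (stackedBook_two_rung a) (stackedBook_two_rung b) ?_
    intro u hu v hv
    have hua : u.1 = a := by rcases Sym2.mem_iff.1 hu with rfl | rfl <;> rfl
    have hvb : v.1 = b := by rcases Sym2.mem_iff.1 hv with rfl | rfl <;> rfl
    refine ⟨fun huv => hab (by rw [← hua, ← hvb, huv]), fun hadj => hab ?_⟩
    rw [← hua, ← hvb]
    exact (stackedBook_adj_of_leaves (by simp [hua, a]) (by simp [hvb, b]) hadj).1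
  calc 2 = ({s((a, 0), (a, 1)), s((b, 0), (b, 1))} : Finset _).card :=
        (Finset.card_pair (by simp [hab])).symm
    _ ≤ im (stackedBook m 2) := hrungs.card_le_im

end StackedBook

theorem centers_unsaturated_stackedBook_two (m : ℕ) (hm : 3 ≤ m)
    (M : Finset (Sym2 (Fin m × Fin 2))) (hM : IsInducedMatching (stackedBook m 2) M)
    (hmax : M.card = im (stackedBook m 2)) :
    ∀ j : Fin 2, ∀ e ∈ M, (⟨0, by omega⟩, j) ∉ e := by
  intro j e he hce
  have hsingle : M = {e} := Finset.eq_singleton_iff_unique_mem.2 ⟨he, fun e' he' =>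
    hM.eq_of_mem_of_isIndepSet he he' hce (stackedBook_two_isIndepSet_nonNeighbors rfl j)⟩
  have htwo := two_le_im_stackedBook_two hm
  rw [← hmax, hsingle, Finset.card_singleton] at htwo
  omega
end

section
/- For the stacked-book graph G_{m,2} = S_m □ P_2 with m ≥ 2, the maximum induced matching number equals m - 1. -/
open SimpleGraph

/-! Both center vertices `(0, 0)` and `(0, 1)` dominate every edge of `G_{m,2}`: each edge has an
endpoint equal or adjacent to them. Hence an induced matching with two or more edges avoids the
center column, so it consists of rungs `{(i, 0), (i, 1)}` over leaves `i`, and there are `m - 1`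
of those; conversely the leaf rungs form an induced matching. -/

theorem IsInducedMatching.eq_of_mem_of_dominating {V : Type*} {G : SimpleGraph V}
    {M : Finset (Sym2 V)} (hM : IsInducedMatching G M) {c : V}
    (hc : ∀ ⦃u v⦄, G.Adj u v → ∃ w ∈ s(u, v), c = w ∨ G.Adj c w)
    {e e' : Sym2 V} (he : e ∈ M) (he' : e' ∈ M) (hce : c ∈ e) : e = e' := by
  by_contra hne
  induction e' using Sym2.inductionOn with
  | hf u v =>
    obtain ⟨w, hw, hcw⟩ := hc (hM.1 he')
    obtain ⟨hne_cw, hnadj⟩ := hM.2 e he _ he' hne c hce w hw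
    exact hcw.elim hne_cw hnadj

theorem stackedBook_two_adj {m : ℕ} {x y : Fin m × Fin 2} :
    (stackedBook m 2).Adj x y ↔
      (x.1 ≠ y.1 ∧ (x.1.val = 0 ∨ y.1.val = 0) ∧ x.2 = y.2) ∨ (x.1 = y.1 ∧ x.2 ≠ y.2) := by
  simp only [stackedBook, _root_.starGraph, boxProd_adj, fromRel_adj, pathGraph_two_eq_top, top_adj]
  tauto

theorem Fin.two_eq_or_eq_of_ne {a b : Fin 2} (hab : a ≠ b) (c : Fin 2) : c = a ∨ c = b := by
  omega

section StackedBook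

variable {n : ℕ}

theorem stackedBook_two_exists_mem_edge {u v : Fin (n + 1) × Fin 2}
    (huv : (stackedBook (n + 1) 2).Adj u v) (j : Fin 2) :
    ∃ w ∈ s(u, v), w.1 = 0 ∨ w.2 = j := by
  rcases stackedBook_two_adj.1 huv with ⟨-, hu | hv, -⟩ | ⟨-, hne⟩
  · exact ⟨u, Sym2.mem_mk_left u v, .inl (Fin.val_eq_zero_iff.1 hu)⟩
  · exact ⟨v, Sym2.mem_mk_right u v, .inl (Fin.val_eq_zero_iff.1 hv)⟩
  · rcases Fin.two_eq_or_eq_of_ne hne j with h | h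
    · exact ⟨u, Sym2.mem_mk_left u v, .inr h.symm⟩
    · exact ⟨v, Sym2.mem_mk_right u v, .inr h.symm⟩

theorem stackedBook_two_eq_or_adj_center {w : Fin (n + 1) × Fin 2} {j : Fin 2}
    (hw : w.1 = 0 ∨ w.2 = j) : (0, j) = w ∨ (stackedBook (n + 1) 2).Adj (0, j) w := by
  by_cases h : (0, j) = w
  · exact .inl h
  · refine .inr (stackedBook_two_adj.2 ?_)
    rw [Prod.ext_iff] at h
    rcases hw with hw | hw
    · exact .inr ⟨hw.symm, fun hj => h ⟨hw.symm, hj⟩⟩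
    · exact .inl ⟨fun h0 => h ⟨h0, hw.symm⟩, .inl rfl, hw.symm⟩

theorem stackedBook_two_center_dominating (j : Fin 2) ⦃u v : Fin (n + 1) × Fin 2⦄
    (huv : (stackedBook (n + 1) 2).Adj u v) :
    ∃ w ∈ s(u, v), (0, j) = w ∨ (stackedBook (n + 1) 2).Adj (0, j) w :=
  (stackedBook_two_exists_mem_edge huv j).imp fun _ ⟨hw, hw'⟩ =>
    ⟨hw, stackedBook_two_eq_or_adj_center hw'⟩

def rung (i : Fin (n + 1)) : Sym2 (Fin (n + 1) × Fin 2) := s((i, 0), (i, 1))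

theorem mem_rung {i : Fin (n + 1)} {w : Fin (n + 1) × Fin 2} : w ∈ rung i ↔ w.1 = i := by
  simp only [rung, Sym2.mem_iff, Prod.ext_iff]
  constructor
  · rintro (⟨h, -⟩ | ⟨h, -⟩) <;> exact h
  · intro h
    exact (Fin.two_eq_or_eq_of_ne Fin.zero_ne_one w.2).imp (⟨h, ·⟩) (⟨h, ·⟩)

theorem mk_eq_rung {u v : Fin (n + 1) × Fin 2} (h₁ : u.1 = v.1) (h₂ : u.2 ≠ v.2) :
    s(u, v) = rung u.1 := by
  ext w
  rw [mem_rung, Sym2.mem_iff]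
  constructor
  · rintro (rfl | rfl)
    exacts [rfl, h₁.symm]
  · intro hw
    exact (Fin.two_eq_or_eq_of_ne h₂ w.2).imp (Prod.ext hw) (Prod.ext (hw.trans h₁))

theorem rung_injective : Function.Injective (rung (n := n)) := fun i j hij =>
  mem_rung.1 (hij ▸ mem_rung.2 rfl : ((i, 0) : Fin (n + 1) × Fin 2) ∈ rung j)

def leafRungs (n : ℕ) : Finset (Sym2 (Fin (n + 1) × Fin 2)) :=
  Finset.univ.image (rung ∘ Fin.succ)

theorem card_leafRungs : (leafRungs n).card = n := by
  rw [leafRungs, Finset.card_image_of_injective _ (rung_injective.comp (Fin.succ_injective n)),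
    Finset.card_univ, Fintype.card_fin]

theorem isInducedMatching_leafRungs : IsInducedMatching (stackedBook (n + 1) 2) (leafRungs n) := by
  constructor
  · intro e he
    obtain ⟨i, -, rfl⟩ := Finset.mem_image.1 he
    exact stackedBook_two_adj.2 (.inr ⟨rfl, Fin.zero_ne_one⟩)
  · intro e₁ h₁ e₂ h₂ hne u hu v hv
    obtain ⟨i, -, rfl⟩ := Finset.mem_image.1 h₁
    obtain ⟨j, -, rfl⟩ := Finset.mem_image.1 h₂
    have hij : i.succ ≠ j.succ := fun h => hne (by simp [h])
    rw [Function.comp_apply, mem_rung] at hu hv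
    refine ⟨fun huv => hij (hu ▸ hv ▸ congrArg Prod.fst huv), fun hadj => ?_⟩
    rcases stackedBook_two_adj.1 hadj with ⟨-, h0, -⟩ | ⟨h1, -⟩
    · rw [hu, hv] at h0
      simp at h0
    · exact hij (hu ▸ hv ▸ h1)

theorem mem_leafRungs_of_isInducedMatching {M : Finset (Sym2 (Fin (n + 1) × Fin 2))}
    (hM : IsInducedMatching (stackedBook (n + 1) 2) M) (hcard : 1 < M.card) {e : Sym2 _}
    (he : e ∈ M) : e ∈ leafRungs n := by
  obtain ⟨e', he', hne⟩ := Finset.exists_mem_ne hcard e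
  have off_center : ∀ w ∈ e, w.1 ≠ 0 := fun w hw h0 =>
    hne (hM.eq_of_mem_of_dominating (stackedBook_two_center_dominating w.2) he he'
      (by rwa [show ((0, w.2) : Fin (n + 1) × Fin 2) = w from Prod.ext h0.symm rfl])).symm
  induction e using Sym2.inductionOn with
  | hf u v =>
    have hu := off_center u (Sym2.mem_mk_left u v)
    have hv := off_center v (Sym2.mem_mk_right u v)
    rcases stackedBook_two_adj.1 (hM.1 he) with ⟨-, h0, -⟩ | ⟨h₁, h₂⟩
    · rw [Fin.val_eq_zero_iff, Fin.val_eq_zero_iff] at h0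
      exact (h0.elim hu hv).elim
    · obtain ⟨i, hi⟩ := Fin.exists_succ_eq.2 hu
      rw [mk_eq_rung h₁ h₂, ← hi]
      exact Finset.mem_image_of_mem _ (Finset.mem_univ i)

theorem card_le_of_isInducedMatching (hn : 1 ≤ n) {M : Finset (Sym2 (Fin (n + 1) × Fin 2))}
    (hM : IsInducedMatching (stackedBook (n + 1) 2) M) : M.card ≤ n := by
  rcases le_or_gt M.card 1 with hle | hlt
  · exact hle.trans hn
  · calc M.card ≤ (leafRungs n).card :=
          Finset.card_le_card fun _ he => mem_leafRungs_of_isInducedMatching hM hlt he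
      _ = n := card_leafRungs

end StackedBook

theorem im_stackedBook_two (m : ℕ) (hm : 2 ≤ m) :
    im (stackedBook m 2) = m - 1 := by
  obtain ⟨n, rfl⟩ : ∃ n, m = n + 1 := ⟨m - 1, by omega⟩
  rw [Nat.add_sub_cancel]
  refine IsGreatest.csSup_eq ⟨⟨leafRungs n, isInducedMatching_leafRungs, card_leafRungs⟩, ?_⟩
  rintro k ⟨M, hM, rfl⟩
  exact card_le_of_isInducedMatching (by omega) hM
end

section
/- In the stacked-book graph G_{m,3} = S_m □ P_3, if M is an induced matching containing an edge incident to the central vertex u_1 of the middle star layer S_m(2), then |M| = 1. -/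
open SimpleGraph

/-
`P_3` is the star centred at its middle vertex, so `G_{m,3}` is the box product of two stars and
the middle centre `c` is the product of their centres. Every edge of a product of stars has an
endpoint in the central layer or the central column, and all of those vertices are `c` or
neighbours of `c`. So an edge of an induced matching through `c` rules out every other edge.
-/

namespace IsInducedMatching

variable {V : Type*} {G : SimpleGraph V} {M : Finset (Sym2 V)}

theorem eq_of_mem_of_eq_or_adj (hM : IsInducedMatching G M) {e₁ e₂ : Sym2 V} (he₁ : e₁ ∈ M)
    (he₂ : e₂ ∈ M) {u v : V} (hu : u ∈ e₁) (hv : v ∈ e₂) (huv : u = v ∨ G.Adj u v) :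
    e₁ = e₂ := by
  by_contra hne
  obtain ⟨hne', hnadj⟩ := hM.2 e₁ he₁ e₂ he₂ hne u hu v hv
  exact huv.elim hne' hnadj

theorem eq_singleton_of_forall_edge_exists_eq_or_adj (hM : IsInducedMatching G M) {e : Sym2 V}
    (he : e ∈ M) {c : V} (hc : c ∈ e) (hcover : ∀ f ∈ G.edgeSet, ∃ v ∈ f, c = v ∨ G.Adj c v) :
    M = {e} := by
  refine Finset.eq_singleton_iff_unique_mem.mpr ⟨he, fun f hf => ?_⟩
  obtain ⟨v, hv, hcv⟩ := hcover f (hM.1 hf)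
  exact (hM.eq_of_mem_of_eq_or_adj he hf hc hv hcv).symm

end IsInducedMatching

namespace SimpleGraph

variable {α β : Type*} {r : α} {s : β}

theorem eq_or_boxProd_starGraph_adj {v : α × β} (hv : v.1 = r ∨ v.2 = s) :
    (r, s) = v ∨ (starGraph r □ starGraph s).Adj (r, s) v := by
  by_cases hrs : (r, s) = v
  · exact Or.inl hrs
  refine Or.inr (boxProd_adj.mpr ?_)
  rcases hv with h | h
  · exact Or.inr ⟨starGraph_center_adj fun hs => hrs (Prod.ext h.symm hs), h.symm⟩
  · exact Or.inl ⟨starGraph_center_adj fun hr => hrs (Prod.ext hr h.symm), h.symm⟩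

theorem exists_mem_fst_eq_or_snd_eq_of_mem_edgeSet_boxProd_starGraph {f : Sym2 (α × β)}
    (hf : f ∈ (starGraph r □ starGraph s).edgeSet) : ∃ v ∈ f, v.1 = r ∨ v.2 = s := by
  induction f using Sym2.ind with
  | h x y =>
    rcases boxProd_adj.mp hf with ⟨hxy, -⟩ | ⟨hxy, -⟩
    · rcases (starGraph_adj.mp hxy).2 with h | h
      · exact ⟨x, Sym2.mem_mk_left x y, Or.inl h⟩
      · exact ⟨y, Sym2.mem_mk_right x y, Or.inl h⟩
    · rcases (starGraph_adj.mp hxy).2 with h | h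
      · exact ⟨x, Sym2.mem_mk_left x y, Or.inr h⟩
      · exact ⟨y, Sym2.mem_mk_right x y, Or.inr h⟩

theorem exists_mem_eq_or_adj_of_mem_edgeSet_boxProd_starGraph {f : Sym2 (α × β)}
    (hf : f ∈ (starGraph r □ starGraph s).edgeSet) :
    ∃ v ∈ f, (r, s) = v ∨ (starGraph r □ starGraph s).Adj (r, s) v := by
  obtain ⟨v, hv, hrs⟩ := exists_mem_fst_eq_or_snd_eq_of_mem_edgeSet_boxProd_starGraph hf
  exact ⟨v, hv, eq_or_boxProd_starGraph_adj hrs⟩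

theorem pathGraph_three_eq_starGraph : pathGraph 3 = starGraph 1 := by
  ext x y
  fin_cases x <;> fin_cases y <;> simp [pathGraph_adj]

end SimpleGraph

theorem starGraph_eq_starGraph_zero (m : ℕ) (hm : 0 < m) :
    _root_.starGraph m = SimpleGraph.starGraph ⟨0, hm⟩ := by
  ext i j
  simp [_root_.starGraph, Fin.ext_iff]

theorem card_eq_one_of_middle_center_saturated (m : ℕ) (hm : 2 ≤ m)
    (M : Finset (Sym2 (Fin m × Fin 3))) (hM : IsInducedMatching (stackedBook m 3) M)
    (e : Sym2 (Fin m × Fin 3)) (he : e ∈ M) (hce : ((⟨0, by omega⟩ : Fin m), (1 : Fin 3)) ∈ e) :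
    M.card = 1 := by
  rw [stackedBook, starGraph_eq_starGraph_zero m (by omega), pathGraph_three_eq_starGraph] at hM
  rw [hM.eq_singleton_of_forall_edge_exists_eq_or_adj he hce
    fun _ => exists_mem_eq_or_adj_of_mem_edgeSet_boxProd_starGraph, Finset.card_singleton]
end

section
/- For the stacked-book graph G_{m,4} = S_m □ P_4 with m ≥ 2, the maximum induced matching number equals m. -/
open SimpleGraph

/-!
Every edge of `S_m □ P_4` is a *rung* `(i, a)(i, a + 1)` inside a page `i` or a *spoke*
`(0, j)(k, j)` inside a level `j`. An induced matching has at most one rung per page, since `P_4`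
has no two separated edges, and at most two spokes, since their levels differ by at least 2. Each
spoke costs a page: one spoke at leaf `k` leaves page `0` or page `k` without rungs, two spokes
leave both of them without rungs. The rungs `(i, 0)(i, 1)`, `i ≠ 0`, together with the spoke
`(0, 3)(1, 3)` attain the bound `m`.
-/

open Finset

variable {V : Type*} {G : SimpleGraph V}

def EdgesSeparated (G : SimpleGraph V) (e₁ e₂ : Sym2 V) : Prop :=
  ∀ u ∈ e₁, ∀ v ∈ e₂, u ≠ v ∧ ¬G.Adj u v

lemma edgesSeparated_mk_iff {x y x' y' : V} :
    EdgesSeparated G s(x, y) s(x', y') ↔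
      (x ≠ x' ∧ ¬G.Adj x x') ∧ (x ≠ y' ∧ ¬G.Adj x y') ∧
        (y ≠ x' ∧ ¬G.Adj y x') ∧ (y ≠ y' ∧ ¬G.Adj y y') := by
  simp only [EdgesSeparated, Sym2.mem_iff, forall_eq_or_imp, forall_eq, and_assoc]

lemma EdgesSeparated.ne {e₁ e₂ : Sym2 V} (h : EdgesSeparated G e₁ e₂) : e₁ ≠ e₂ := by
  rintro rfl
  induction e₁ using Sym2.ind with
  | _ x y => exact (h x (Sym2.mem_mk_left x y) x (Sym2.mem_mk_left x y)).1 rfl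

lemma IsInducedMatching.edgesSeparated {M : Finset (Sym2 V)} (hM : IsInducedMatching G M)
    {e₁ e₂ : Sym2 V} (h₁ : e₁ ∈ M) (h₂ : e₂ ∈ M) (hne : e₁ ≠ e₂) :
    EdgesSeparated G e₁ e₂ :=
  hM.2 e₁ h₁ e₂ h₂ hne

lemma isInducedMatching_image {ι : Type*} [Fintype ι] [DecidableEq (Sym2 V)] {f : ι → Sym2 V}
    (hedge : ∀ i, f i ∈ G.edgeSet) (hsep : Pairwise fun i j => EdgesSeparated G (f i) (f j)) :
    IsInducedMatching G (univ.image f) ∧ #(univ.image f) = Fintype.card ι := by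
  have hf : Function.Injective f := fun i j hij => by
    by_contra hne
    exact (hsep hne).ne hij
  refine ⟨⟨?_, ?_⟩, card_image_of_injective _ hf⟩
  · rintro _ he
    obtain ⟨i, -, rfl⟩ := mem_image.mp he
    exact hedge i
  · simp only [mem_image, mem_univ, true_and]
    rintro _ ⟨i, rfl⟩ _ ⟨j, rfl⟩ hne
    exact hsep fun hij => hne (congrArg f hij)

lemma im_eq_of_forall_card_le {k : ℕ} (hex : ∃ M, IsInducedMatching G M ∧ #M = k)
    (hle : ∀ M, IsInducedMatching G M → #M ≤ k) : im G = k :=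
  IsGreatest.csSup_eq ⟨hex, by rintro _ ⟨M, hM, rfl⟩; exact hle M hM⟩

lemma stackedBook_adj_s10 {m n : ℕ} {u v : Fin m × Fin n} :
    (stackedBook m n).Adj u v ↔
      (u.2 = v.2 ∧ u.1 ≠ v.1 ∧ (u.1.val = 0 ∨ v.1.val = 0)) ∨
        (u.1 = v.1 ∧ (u.2.val + 1 = v.2.val ∨ v.2.val + 1 = u.2.val)) := by
  simp only [stackedBook, boxProd_adj, _root_.starGraph, fromRel_adj, pathGraph_adj, ne_eq]
  tauto

namespace stackedBook

variable {m n : ℕ}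

def rung (i : Fin m) (a : Fin n) : Sym2 (Fin m × Fin (n + 1)) :=
  s((i, a.castSucc), (i, a.succ))

lemma rung_mem_edgeSet (i : Fin m) (a : Fin n) : rung i a ∈ (stackedBook m (n + 1)).edgeSet := by
  simp [rung, stackedBook_adj_s10]

lemma mk_eq_rung (i : Fin m) {a b : Fin (n + 1)} (hab : a.val + 1 = b.val) :
    s((i, a), (i, b)) = rung i ⟨a, by omega⟩ := by
  simp only [rung, Sym2.eq_iff, Prod.ext_iff, Fin.ext_iff, Fin.val_castSucc, Fin.val_succ,
    and_true, true_and]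
  omega

lemma rung_inj {i i' : Fin m} {a b : Fin n} : rung i a = rung i' b ↔ i = i' ∧ a = b := by
  simp only [rung, Sym2.eq_iff, Prod.ext_iff, Fin.ext_iff, Fin.val_castSucc, Fin.val_succ]
  omega

lemma not_edgesSeparated_rung_rung (i : Fin m) (a b : Fin 3) :
    ¬EdgesSeparated (stackedBook m 4) (rung i a) (rung i b) := by
  simp only [rung, edgesSeparated_mk_iff, stackedBook_adj_s10, ne_eq, Prod.ext_iff, Fin.ext_iff,
    Fin.val_castSucc, Fin.val_succ]
  grind

variable {M : Finset (Sym2 (Fin m × Fin 4))}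

def rungsOf (M : Finset (Sym2 (Fin m × Fin 4))) : Finset (Fin m × Fin 3) :=
  {p | rung p.1 p.2 ∈ M}

def rungPages (M : Finset (Sym2 (Fin m × Fin 4))) : Finset (Fin m) :=
  (rungsOf M).image Prod.fst

lemma mem_rungPages {i : Fin m} : i ∈ rungPages M ↔ ∃ a, rung i a ∈ M := by
  simp [rungPages, rungsOf]

lemma card_rungsOf_eq_card_rungPages (hM : IsInducedMatching (stackedBook m 4) M) :
    #(rungsOf M) = #(rungPages M) := by
  refine (card_image_of_injOn ?_).symm
  rintro ⟨i, a⟩ ha ⟨i', b⟩ hb (rfl : i = i')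
  simp only [rungsOf, mem_coe, mem_filter_univ] at ha hb
  by_contra hab
  refine not_edgesSeparated_rung_rung i a b (hM.edgesSeparated ha hb ?_)
  rw [Ne, rung_inj]
  exact fun h => hab (Prod.ext rfl h.2)

variable [NeZero m]

def spoke (k : Fin m) (j : Fin n) : Sym2 (Fin m × Fin n) :=
  s((0, j), (k, j))

lemma spoke_mem_edgeSet {k : Fin m} (hk : k ≠ 0) (j : Fin n) :
    spoke k j ∈ (stackedBook m n).edgeSet := by
  simp [spoke, stackedBook_adj_s10, hk.symm]

lemma spoke_inj {k k' : Fin m} {j j' : Fin n} (hk : k ≠ 0) :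
    spoke k j = spoke k' j' ↔ k = k' ∧ j = j' := by
  simp only [spoke, Sym2.eq_iff, Prod.ext_iff, Fin.ext_iff, Fin.val_zero, ne_eq] at hk ⊢
  grind

lemma rung_ne_spoke (i : Fin m) (a : Fin n) (k : Fin m) (j : Fin (n + 1)) :
    rung i a ≠ spoke k j := by
  simp only [rung, spoke, ne_eq, Sym2.eq_iff, Prod.ext_iff, Fin.ext_iff, Fin.val_castSucc,
    Fin.val_succ]
  omega

lemma eq_rung_or_eq_spoke {e : Sym2 (Fin m × Fin (n + 1))}
    (he : e ∈ (stackedBook m (n + 1)).edgeSet) :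
    (∃ i a, e = rung i a) ∨ ∃ k j, k ≠ 0 ∧ e = spoke k j := by
  induction e using Sym2.ind with
  | _ u v =>
  obtain ⟨i, a⟩ := u
  obtain ⟨i', b⟩ := v
  rw [mem_edgeSet, stackedBook_adj_s10] at he
  dsimp only at he
  rcases he with ⟨rfl, hii', hi | hi'⟩ | ⟨rfl, hab | hba⟩
  · obtain rfl : i = 0 := Fin.ext hi
    exact .inr ⟨i', a, hii'.symm, rfl⟩
  · obtain rfl : i' = 0 := Fin.ext hi'
    exact .inr ⟨i, a, hii', Sym2.eq_swap⟩
  · exact .inl ⟨i, _, mk_eq_rung i hab⟩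
  · exact .inl ⟨i, _, Sym2.eq_swap.trans (mk_eq_rung i hba)⟩

lemma spoke_levels_far {k k' : Fin m} {j j' : Fin 4}
    (h : EdgesSeparated (stackedBook m 4) (spoke k j) (spoke k' j')) :
    j.val + 2 ≤ j'.val ∨ j'.val + 2 ≤ j.val := by
  simp only [spoke, edgesSeparated_mk_iff, stackedBook_adj_s10, ne_eq, Prod.ext_iff, Fin.ext_iff,
    Fin.val_zero] at h
  grind

lemma rung_spoke_levels_far {i k : Fin m} {a : Fin 3} {j : Fin 4}
    (h : EdgesSeparated (stackedBook m 4) (rung i a) (spoke k j)) (hi : i = 0 ∨ i = k) :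
    a.val + 3 ≤ j.val ∨ j.val + 2 ≤ a.val := by
  rcases hi with rfl | rfl <;>
  · simp only [rung, spoke, edgesSeparated_mk_iff, stackedBook_adj_s10, ne_eq, Prod.ext_iff,
      Fin.ext_iff, Fin.val_castSucc, Fin.val_succ, Fin.val_zero] at h
    grind

lemma rung_spoke_levels_ne {i k : Fin m} {a : Fin 3} {j : Fin 4}
    (h : EdgesSeparated (stackedBook m 4) (rung i a) (spoke k j)) (hi : i ≠ 0) :
    a.val ≠ j.val ∧ a.val + 1 ≠ j.val := by
  simp only [rung, spoke, edgesSeparated_mk_iff, stackedBook_adj_s10, ne_eq, Prod.ext_iff, Fin.ext_iff,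
    Fin.val_castSucc, Fin.val_succ, Fin.val_zero] at h hi
  grind

lemma not_edgesSeparated_rung_zero_rung (k : Fin m) (a : Fin 3) :
    ¬EdgesSeparated (stackedBook m 4) (rung 0 a) (rung k a) := by
  simp only [rung, edgesSeparated_mk_iff, stackedBook_adj_s10, ne_eq, Prod.ext_iff, Fin.ext_iff,
    Fin.val_castSucc, Fin.val_succ, Fin.val_zero]
  grind

lemma not_edgesSeparated_rung_rung_of_spoke {k : Fin m} {a b : Fin 3} {j : Fin 4}
    (h₀ : EdgesSeparated (stackedBook m 4) (rung 0 a) (spoke k j))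
    (hk : EdgesSeparated (stackedBook m 4) (rung k b) (spoke k j)) :
    ¬EdgesSeparated (stackedBook m 4) (rung 0 a) (rung k b) := by
  obtain rfl : a = b := by
    have := rung_spoke_levels_far h₀ (.inl rfl)
    have := rung_spoke_levels_far hk (.inr rfl)
    omega
  exact not_edgesSeparated_rung_zero_rung k a

lemma page_ne_of_edgesSeparated_spokes {i k k' : Fin m} {a : Fin 3} {j j' : Fin 4} (hk : k ≠ 0)
    (hs : EdgesSeparated (stackedBook m 4) (spoke k j) (spoke k' j'))
    (h : EdgesSeparated (stackedBook m 4) (rung i a) (spoke k j))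
    (h' : EdgesSeparated (stackedBook m 4) (rung i a) (spoke k' j')) : i ≠ 0 ∧ i ≠ k := by
  have hjj' := spoke_levels_far hs
  constructor
  · rintro rfl
    have := rung_spoke_levels_far h (.inl rfl)
    have := rung_spoke_levels_far h' (.inl rfl)
    omega
  · rintro rfl
    have := rung_spoke_levels_far h (.inr rfl)
    have := rung_spoke_levels_ne h' hk
    omega

def spokesOf (M : Finset (Sym2 (Fin m × Fin 4))) : Finset (Fin m × Fin 4) :=
  {p | p.1 ≠ 0 ∧ spoke p.1 p.2 ∈ M}

lemma edgesSeparated_rung_spoke (hM : IsInducedMatching (stackedBook m 4) M) {i k : Fin m}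
    {a : Fin 3} {j : Fin 4} (ha : rung i a ∈ M) (hs : spoke k j ∈ M) :
    EdgesSeparated (stackedBook m 4) (rung i a) (spoke k j) :=
  hM.edgesSeparated ha hs (rung_ne_spoke i a k j)

lemma edgesSeparated_of_mem_spokesOf (hM : IsInducedMatching (stackedBook m 4) M)
    {p q : Fin m × Fin 4} (hp : p ∈ spokesOf M) (hq : q ∈ spokesOf M) (hne : p ≠ q) :
    EdgesSeparated (stackedBook m 4) (spoke p.1 p.2) (spoke q.1 q.2) := by
  simp only [spokesOf, mem_filter_univ] at hp hq
  refine hM.edgesSeparated hp.2 hq.2 ?_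
  rw [Ne, spoke_inj hp.1]
  exact fun h => hne (Prod.ext h.1 h.2)

lemma card_le_card_rungsOf_add_card_spokesOf (hM : IsInducedMatching (stackedBook m 4) M) :
    #M ≤ #(rungsOf M) + #(spokesOf M) := by
  have hsub : M ⊆ (rungsOf M).image (fun p => rung p.1 p.2) ∪
      (spokesOf M).image (fun p => spoke p.1 p.2) := by
    intro e he
    simp only [rungsOf, spokesOf, mem_union, mem_image, mem_filter_univ, Prod.exists]
    rcases eq_rung_or_eq_spoke (hM.1 he) with ⟨i, a, rfl⟩ | ⟨k, j, hk, rfl⟩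
    · exact .inl ⟨i, a, he, rfl⟩
    · exact .inr ⟨k, j, ⟨hk, he⟩, rfl⟩
  exact (card_le_card hsub).trans <| (card_union_le _ _).trans <|
    add_le_add card_image_le card_image_le

lemma card_spokesOf_le_two (hM : IsInducedMatching (stackedBook m 4) M) :
    #(spokesOf M) ≤ 2 := by
  by_contra! h
  obtain ⟨p, q, r, hp, hq, hr, hpq, hpr, hqr⟩ := two_lt_card_iff.mp h
  have := spoke_levels_far (edgesSeparated_of_mem_spokesOf hM hp hq hpq)
  have := spoke_levels_far (edgesSeparated_of_mem_spokesOf hM hp hr hpr)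
  have := spoke_levels_far (edgesSeparated_of_mem_spokesOf hM hq hr hqr)
  omega

lemma zero_notMem_rungPages_or_notMem (hM : IsInducedMatching (stackedBook m 4) M)
    {k : Fin m} {j : Fin 4} (hkj : (k, j) ∈ spokesOf M) :
    0 ∉ rungPages M ∨ k ∉ rungPages M := by
  obtain ⟨hk, hs⟩ := mem_filter_univ _ |>.mp hkj
  simp only [mem_rungPages]
  by_contra! ⟨⟨a, ha⟩, ⟨b, hb⟩⟩
  refine not_edgesSeparated_rung_rung_of_spoke (edgesSeparated_rung_spoke hM ha hs)
    (edgesSeparated_rung_spoke hM hb hs) (hM.edgesSeparated ha hb ?_)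
  rw [Ne, rung_inj]
  exact fun h => hk h.1.symm

lemma zero_notMem_rungPages_and_notMem (hM : IsInducedMatching (stackedBook m 4) M)
    {k k' : Fin m} {j j' : Fin 4} (hkj : (k, j) ∈ spokesOf M) (hkj' : (k', j') ∈ spokesOf M)
    (hne : (k, j) ≠ (k', j')) :
    0 ∉ rungPages M ∧ k ∉ rungPages M := by
  have hs := edgesSeparated_of_mem_spokesOf hM hkj hkj' hne
  obtain ⟨hk, hkjM⟩ := mem_filter_univ _ |>.mp hkj
  have hk'j'M := (mem_filter_univ _ |>.mp hkj').2
  have hpage : ∀ i a, rung i a ∈ M → i ≠ 0 ∧ i ≠ k := fun i a ha =>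
    page_ne_of_edgesSeparated_spokes hk hs (edgesSeparated_rung_spoke hM ha hkjM)
      (edgesSeparated_rung_spoke hM ha hk'j'M)
  simp only [mem_rungPages]
  exact ⟨fun ⟨a, ha⟩ => (hpage 0 a ha).1 rfl, fun ⟨a, ha⟩ => (hpage k a ha).2 rfl⟩

lemma card_le_of_isInducedMatching (hM : IsInducedMatching (stackedBook m 4) M) : #M ≤ m := by
  have hM_le := card_le_card_rungsOf_add_card_spokesOf hM
  rw [card_rungsOf_eq_card_rungPages hM] at hM_le
  have hP_le : #(rungPages M) ≤ m := (card_le_univ _).trans_eq (Fintype.card_fin m)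
  have hS_le := card_spokesOf_le_two hM
  rcases (spokesOf M).eq_empty_or_nonempty with hS | ⟨⟨k, j⟩, hkj⟩
  · rw [hS, card_empty] at hM_le
    omega
  rcases le_or_gt #(spokesOf M) 1 with hS | hS
  · have : #(rungPages M) < m := by
      rcases zero_notMem_rungPages_or_notMem hM hkj with h | h <;>
      exact (card_lt_univ_of_notMem h).trans_eq (Fintype.card_fin m)
    omega
  · obtain ⟨⟨k', j'⟩, hkj', hne⟩ := exists_mem_ne hS (k, j)
    obtain ⟨h0, hk⟩ := zero_notMem_rungPages_and_notMem hM hkj hkj' hne.symm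
    have hk0 : k ≠ 0 := (mem_filter_univ _ |>.mp hkj).1
    have : #{0, k} ≤ #(rungPages M)ᶜ := card_le_card <| insert_subset_iff.mpr
      ⟨mem_compl.mpr h0, singleton_subset_iff.mpr (mem_compl.mpr hk)⟩
    rw [card_pair hk0.symm, card_compl, Fintype.card_fin] at this
    omega

lemma exists_isInducedMatching_card_eq (hm : 2 ≤ m) :
    ∃ M, IsInducedMatching (stackedBook m 4) M ∧ #M = m := by
  let f : Fin m → Sym2 (Fin m × Fin 4) := fun i =>
    if i = 0 then spoke ⟨1, hm⟩ 3 else rung i 0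
  have hedge : ∀ i, f i ∈ (stackedBook m 4).edgeSet := fun i => by
    dsimp only [f]
    split_ifs
    · exact spoke_mem_edgeSet (by simp [Fin.ext_iff]) 3
    · exact rung_mem_edgeSet i 0
  have hsep : Pairwise fun i i' => EdgesSeparated (stackedBook m 4) (f i) (f i') := by
    intro i i' h
    dsimp only [f]
    split_ifs with hi hi' hi' <;>
    · simp only [rung, spoke, edgesSeparated_mk_iff, stackedBook_adj_s10, ne_eq, Prod.ext_iff,
        Fin.ext_iff, Fin.val_castSucc, Fin.val_succ, Fin.val_zero] at h hi hi' ⊢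
      grind
  obtain ⟨hM, hcard⟩ := isInducedMatching_image hedge hsep
  exact ⟨_, hM, hcard.trans (Fintype.card_fin m)⟩

end stackedBook

theorem im_stackedBook_four (m : ℕ) (hm : 2 ≤ m) :
    im (stackedBook m 4) = m := by
  have : NeZero m := ⟨by omega⟩
  exact im_eq_of_forall_card_le (stackedBook.exists_isInducedMatching_card_eq hm)
    fun _ => stackedBook.card_le_of_isInducedMatching
end
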